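/- arXiv:2210.00508 — 7 statements merged into one kernel-verified Lean document; each statement's English description precedes it below -/
import Mathlib

section
/- The ruler sequence, defined as the fixed point of the morphism ρ(n) = 0(n+1) starting from 0, is square-free; that is, it contains no nonempty factor of the form yy. -/
/-!
The fixed-point equation says `f (2k) = 0` and `f (2k+1) = f k + 1`, so `f n = 0` exactly for
even `n`. A square `yy` with `|y|` odd would compare a letter at an even position with one at an
odd position, hence `|y|` is even; and then reading off the odd positions of the square gives a
square of half the length, shifted down by one. By descent on `|y|` there is no square at all.
-/

/-- The morphism ρ applied to an infinite word: ρ(n) = 0 (n+1). -/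
def rhoInf (f : ℕ → ℕ) : ℕ → ℕ := fun n => if n % 2 = 0 then 0 else f (n / 2) + 1

/-- An infinite word (ℕ → ℕ) is square-free: it contains no nonempty factor yy. -/
def SqFreeInf (f : ℕ → ℕ) : Prop :=
  ∀ i l : ℕ, 0 < l → ∃ j < l, f (i + j) ≠ f (i + l + j)

namespace RulerSequence

variable {f : ℕ → ℕ}

theorem apply_two_mul (hfix : rhoInf f = f) (k : ℕ) : f (2 * k) = 0 := by
  rw [← hfix]
  simp [rhoInf]

theorem apply_two_mul_add_one (hfix : rhoInf f = f) (k : ℕ) : f (2 * k + 1) = f k + 1 := by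
  conv_lhs => rw [← hfix]
  simp only [rhoInf]
  rw [if_neg (by omega), show (2 * k + 1) / 2 = k by omega]

theorem apply_eq_zero_iff_even (hfix : rhoInf f = f) (n : ℕ) : f n = 0 ↔ Even n := by
  rcases Nat.even_or_odd' n with ⟨k, rfl | rfl⟩
  · simp [apply_two_mul hfix]
  · simp [apply_two_mul_add_one hfix]

theorem even_of_apply_add_eq (hfix : rhoInf f = f) {i l : ℕ} (h : f i = f (i + l)) : Even l := by
  have hpar : Even i ↔ Even (i + l) := by
    rw [← apply_eq_zero_iff_even hfix, ← apply_eq_zero_iff_even hfix, h]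
  rw [Nat.even_add] at hpar
  tauto

theorem square_of_square_two_mul (hfix : rhoInf f = f) {i m : ℕ}
    (h : ∀ j < 2 * m, f (i + j) = f (i + 2 * m + j)) :
    ∀ t < m, f (i / 2 + t) = f (i / 2 + m + t) := by
  intro t ht
  have hj := h (2 * t + 1 - i % 2) (by omega)
  rw [show i + (2 * t + 1 - i % 2) = 2 * (i / 2 + t) + 1 by omega,
    show i + 2 * m + (2 * t + 1 - i % 2) = 2 * (i / 2 + m + t) + 1 by omega,
    apply_two_mul_add_one hfix, apply_two_mul_add_one hfix] at hj
  omega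

theorem not_square (hfix : rhoInf f = f) (l : ℕ) (hl : 0 < l) (i : ℕ) :
    ¬ ∀ j < l, f (i + j) = f (i + l + j) := by
  induction l using Nat.strong_induction_on generalizing i with
  | _ l ih =>
    intro h
    obtain ⟨m, rfl⟩ := (even_of_apply_add_eq hfix (by simpa using h 0 hl)).two_dvd
    exact ih m (by omega) (by omega) (i / 2) (square_of_square_two_mul hfix h)

end RulerSequence

theorem ruler_sequence_squarefree_general (f : ℕ → ℕ) (hfix : rhoInf f = f) :
    SqFreeInf f := by
  intro i l hl
  simpa using RulerSequence.not_square hfix l hl i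

/-- The ruler sequence, i.e. the infinite fixed point of ρ starting with 0,
is square-free. -/
theorem ruler_sequence_squarefree (f : ℕ → ℕ) (hfix : rhoInf f = f) (h0 : f 0 = 0) :
    SqFreeInf f :=
  ruler_sequence_squarefree_general f hfix
end

section
/- For every n ≥ 0, the word R_n := ρ^n(0) satisfies the recurrence R_{n+1} = R_n · R_n⁺, where R_n⁺ denotes R_n with its last letter increased by 1. -/
/-- The morphism ρ : ℕ* → ℕ* mapping letter n to the word 0(n+1). -/
def rho (w : List ℕ) : List ℕ := w.flatMap (fun n => [0, n + 1])

/-- R_n := ρ^n(0). -/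
def R (n : ℕ) : List ℕ := rho^[n] [0]

/-- w⁺: the word w with its last letter increased by 1. -/
def succW (w : List ℕ) : List ℕ := w.dropLast ++ [w.getLast! + 1]

/-! Since ρ is a morphism and every image ρ(n) = 0(n+1) ends in its letter shifted by one,
ρ commutes with w ↦ w⁺ on nonempty words. Applying ρ to R_{n+1} = R_n · R_n⁺ therefore gives
R_{n+2} = ρ(R_n) · ρ(R_n)⁺ = R_{n+1} · R_{n+1}⁺. -/

lemma rho_append (a b : List ℕ) : rho (a ++ b) = rho a ++ rho b :=
  List.flatMap_append

lemma rho_concat (w : List ℕ) (x : ℕ) : rho (w ++ [x]) = rho w ++ [0, x + 1] := by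
  simp [rho]

lemma rho_ne_nil {w : List ℕ} (hw : w ≠ []) : rho w ≠ [] := by
  obtain ⟨a, x, rfl⟩ := List.eq_nil_or_concat' w |>.resolve_left hw
  simp [rho_concat]

lemma succW_concat (w : List ℕ) (x : ℕ) : succW (w ++ [x]) = w ++ [x + 1] := by
  simp [succW, List.getLast!_eq_getLast?_getD]

lemma succW_rho {w : List ℕ} (hw : w ≠ []) : succW (rho w) = rho (succW w) := by
  obtain ⟨a, x, rfl⟩ := List.eq_nil_or_concat' w |>.resolve_left hw
  rw [rho_concat, ← List.singleton_append, ← List.append_assoc, succW_concat, succW_concat,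
    rho_concat, List.append_assoc, List.singleton_append]

lemma R_succ (n : ℕ) : R (n + 1) = rho (R n) :=
  Function.iterate_succ_apply' rho n [0]

lemma R_ne_nil (n : ℕ) : R n ≠ [] := by
  induction n with
  | zero => simp [R]
  | succ n ih => exact R_succ n ▸ rho_ne_nil ih

/-- For every n ≥ 0, R_{n+1} = R_n · R_n⁺. -/
theorem R_succ_eq (n : ℕ) : R (n + 1) = R n ++ succW (R n) := by
  induction n with
  | zero => rfl
  | succ n ih =>
    calc R (n + 2) = rho (R n ++ succW (R n)) := by rw [R_succ, ih]
      _ = R (n + 1) ++ succW (R (n + 1)) := by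
        rw [rho_append, ← succW_rho (R_ne_nil n), ← R_succ]
end

section
/- If the morphism ρ(n) = 0(n+1) is applied to a square-free word w, the image ρ(w) is square-free. -/
def SqFree (w : List ℕ) : Prop := ∀ y : List ℕ, y ≠ [] → ¬ (y ++ y) <:+: w

namespace List

variable {α : Type*}

def IsSquareAt (v : List α) (k L : ℕ) : Prop :=
  k + 2 * L ≤ v.length ∧ ∀ i < L, v[k + i]? = v[k + L + i]?

theorem exists_append_self_infix_iff {v : List α} {L : ℕ} :
    (∃ y : List α, y.length = L ∧ y ++ y <:+: v) ↔ ∃ k, v.IsSquareAt k L := by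
  simp only [infix_iff_getElem?, length_append]
  constructor
  · rintro ⟨y, rfl, k, hk, hyy⟩
    refine ⟨k, by omega, fun i hi => ?_⟩
    have h₁ := hyy i (by omega)
    have h₂ := hyy (i + y.length) (by omega)
    rw [getElem_append_left hi] at h₁
    rw [getElem_append_right (by omega)] at h₂
    simp only [Nat.add_sub_cancel] at h₂
    rw [add_comm k, h₁, ← h₂]
    congr 1; omega
  · rintro ⟨k, hk, hsq⟩
    refine ⟨(v.drop k).take L, by simp; omega, k, by simp; omega, fun i hi => ?_⟩
    have hlen : ((v.drop k).take L).length = L := by simp; omega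
    rw [getElem_append]
    split_ifs with h
    · simp [add_comm i]
    · have hper := hsq (i - L) (by omega)
      simp only [getElem_take, getElem_drop, hlen, ← getElem?_eq_getElem, hper]
      congr 1; omega

end List

theorem length_rho (w : List ℕ) : (rho w).length = 2 * w.length := by
  simp [rho, mul_comm]

theorem rho_cons (a : ℕ) (w : List ℕ) : rho (a :: w) = 0 :: (a + 1) :: rho w := rfl

theorem getElem?_rho_two_mul (w : List ℕ) (i : ℕ) :
    (rho w)[2 * i]? = w[i]?.map fun _ => 0 := by
  induction w generalizing i with
  | nil => simp [rho]
  | cons a w ih => cases i <;> simp [rho_cons, Nat.mul_succ, ih]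

theorem getElem?_rho_two_mul_add_one (w : List ℕ) (i : ℕ) :
    (rho w)[2 * i + 1]? = w[i]?.map (· + 1) := by
  induction w generalizing i with
  | nil => simp [rho]
  | cons a w ih => cases i <;> simp [rho_cons, Nat.mul_succ, ih]

theorem getElem_rho_eq_zero_iff {w : List ℕ} {j : ℕ} (hj : j < (rho w).length) :
    (rho w)[j] = 0 ↔ Even j := by
  rw [length_rho] at hj
  obtain ⟨q, rfl | rfl⟩ := Nat.even_or_odd' j
  · have h := getElem?_rho_two_mul w q
    rw [List.getElem?_eq_getElem (by rw [length_rho]; omega),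
      List.getElem?_eq_getElem (by omega)] at h
    simpa using h
  · have h := getElem?_rho_two_mul_add_one w q
    rw [List.getElem?_eq_getElem (by rw [length_rho]; omega),
      List.getElem?_eq_getElem (by omega)] at h
    simp [Option.some_inj.mp h]

theorem List.IsSquareAt.of_rho {w : List ℕ} {k m : ℕ} (h : (rho w).IsSquareAt k (2 * m)) :
    w.IsSquareAt (k / 2) m := by
  obtain ⟨hlen, hsq⟩ := h
  rw [length_rho] at hlen
  refine ⟨by omega, fun i hi => ?_⟩
  -- the offset `2 * i + 1 - k % 2` lands on the odd position `2 * (k / 2 + i) + 1` of `rho w`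
  have h := hsq (2 * i + 1 - k % 2) (by omega)
  have e₁ : k + (2 * i + 1 - k % 2) = 2 * (k / 2 + i) + 1 := by omega
  have e₂ : k + 2 * m + (2 * i + 1 - k % 2) = 2 * (k / 2 + m + i) + 1 := by omega
  rw [e₁, e₂, getElem?_rho_two_mul_add_one, getElem?_rho_two_mul_add_one] at h
  exact Option.map_injective (add_left_injective 1) h

theorem not_isSquareAt_rho_of_odd {w : List ℕ} {k L : ℕ} (hL : Odd L) :
    ¬ (rho w).IsSquareAt k L := by
  rintro ⟨hlen, hsq⟩
  have hL₀ := hL.pos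
  have h := hsq 0 hL₀
  simp only [add_zero] at h
  rw [List.getElem?_eq_getElem (by omega), List.getElem?_eq_getElem (by omega),
    Option.some_inj] at h
  have hpar := getElem_rho_eq_zero_iff (w := w) (j := k + L) (by omega)
  rw [← h, getElem_rho_eq_zero_iff, Nat.even_add, ← Nat.not_odd_iff_even (n := L)] at hpar
  tauto

/-- The image under ρ of a square-free word is square-free. -/
theorem rho_squarefree (w : List ℕ) (hw : SqFree w) : SqFree (rho w) := by
  intro y hy hyy
  obtain ⟨k, hk⟩ := List.exists_append_self_infix_iff.mp ⟨y, rfl, hyy⟩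
  obtain ⟨m, hm⟩ | hodd := Nat.even_or_odd y.length
  · rw [hm, ← two_mul] at hk
    obtain ⟨z, hz, hzz⟩ := List.exists_append_self_infix_iff.mpr ⟨_, hk.of_rho⟩
    have hy₀ := List.length_pos_iff.mpr hy
    exact hw z (List.ne_nil_of_length_pos (by omega)) hzz
  · exact not_isSquareAt_rho_of_odd hodd hk
end

section
/- For n > k > 0, the word ψ_1(k) := (k+1)·P_0(k+1) is not a factor of ψ_1(n) := (n+1)·P_0(n+1), and ψ_1(n) is not a factor of ψ_1(k). -/
def P0 (n : ℕ) : List ℕ := (R (n + 1)).dropLast.dropLast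

/-- The morphism ψ₁: ψ₁(0) = 202101 and ψ₁(n) = (n+1)·P₀(n+1) for n ≥ 1. -/
def psi1 (n : ℕ) : List ℕ := if n = 0 then [2, 0, 2, 1, 0, 1] else (n + 1) :: P0 (n + 1)

/-! ψ₁(m) is the letter m+1 followed by the ruler sequence v₂(1), v₂(2), …, v₂(2^(m+2) - 2), so
for p > 0 the letter at position p is v₂(p). For k ≠ n, an occurrence of ψ₁(k) in ψ₁(n) at
position i cannot start at i = 0, as the first letters differ, so the two letters k+1 of ψ₁(k) at
offsets 0 and 2^(k+1) force v₂(i) = v₂(i + 2^(k+1)) = k+1; but adding 2^(v₂ i) to i strictly raises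
its 2-adic valuation. -/

def ruler (i : ℕ) : ℕ := padicValNat 2 (i + 1)

lemma ruler_two_mul (i : ℕ) : ruler (2 * i) = 0 :=
  padicValNat.eq_zero_of_not_dvd (by omega)

lemma ruler_two_mul_add_one (i : ℕ) : ruler (2 * i + 1) = ruler i + 1 := by
  rw [ruler, ruler, show 2 * i + 1 + 1 = 2 * (i + 1) by ring, padicValNat.mul two_ne_zero (by omega),
    padicValNat.self one_lt_two, add_comm]

lemma range_two_mul_eq_flatMap (N : ℕ) :
    List.range (2 * N) = (List.range N).flatMap (fun i => [2 * i, 2 * i + 1]) := by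
  induction N with
  | zero => rfl
  | succ N ih =>
    rw [show 2 * (N + 1) = 2 * N + 1 + 1 by ring, List.range_succ, List.range_succ, List.range_succ,
      ih]
    simp

lemma R_eq_map_ruler (n : ℕ) : R n = (List.range (2 ^ n)).map ruler := by
  induction n with
  | zero => simp [R, ruler]
  | succ n ih =>
    rw [R, Function.iterate_succ_apply', ← R, ih, pow_succ', range_two_mul_eq_flatMap, rho,
      List.flatMap_map, List.map_flatMap]
    exact List.flatMap_congr fun i _ => by simp [ruler_two_mul, ruler_two_mul_add_one]

lemma psi1_eq_cons {m : ℕ} (hm : m ≠ 0) :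
    psi1 m = (m + 1) :: (List.range (2 ^ (m + 2) - 2)).map ruler := by
  have h : 2 ^ (m + 2) = 2 ^ (m + 2) - 2 + 1 + 1 := by
    have := Nat.pow_le_pow_right two_pos (show 1 ≤ m + 2 by omega)
    omega
  rw [psi1, if_neg hm, P0, R_eq_map_ruler, h, List.range_succ, List.range_succ]
  simp

lemma length_psi1 {m : ℕ} (hm : m ≠ 0) : (psi1 m).length = 2 ^ (m + 2) - 1 := by
  have := Nat.pow_le_pow_right two_pos (show 1 ≤ m + 2 by omega)
  rw [psi1_eq_cons hm, List.length_cons, List.length_map, List.length_range]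
  omega

lemma getElem_psi1 {m : ℕ} (hm : m ≠ 0) (p : ℕ) (hp : p < (psi1 m).length) :
    (psi1 m)[p] = if p = 0 then m + 1 else padicValNat 2 p := by
  simp only [psi1_eq_cons hm]
  rcases p with _ | q
  · rfl
  · simp [ruler]

lemma padicValNat_eq_of_getElem?_psi1 {m p a : ℕ} (hm : m ≠ 0) (ha : a ≠ m + 1)
    (h : (psi1 m)[p]? = some a) : padicValNat 2 p = a := by
  obtain ⟨hp, rfl⟩ := List.getElem?_eq_some_iff.mp h
  rw [getElem_psi1 hm] at ha ⊢
  split_ifs at ha ⊢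
  · exact absurd rfl ha
  · rfl

lemma padicValNat_two_lt_add_two_pow {a : ℕ} (ha : a ≠ 0) :
    padicValNat 2 a < padicValNat 2 (a + 2 ^ padicValNat 2 a) := by
  obtain ⟨v, d, hd, rfl⟩ := Nat.exists_eq_two_pow_mul_odd ha
  have hv : padicValNat 2 (2 ^ v * d) = v := by
    rw [padicValNat.mul (by positivity) (by rintro rfl; simp at hd), padicValNat.prime_pow,
      padicValNat.eq_zero_of_not_dvd (by simpa [Nat.odd_iff, Nat.dvd_iff_mod_eq_zero] using hd)]
    rfl
  obtain ⟨e, rfl⟩ := hd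
  rw [hv, ← Nat.succ_le_iff, ← padicValNat_dvd_iff_le (by positivity)]
  exact ⟨e + 1, by rw [pow_succ]; ring⟩

theorem psi1_not_infix {k n : ℕ} (hk : k ≠ 0) (hn : n ≠ 0) (hkn : k ≠ n) :
    ¬ psi1 k <:+: psi1 n := by
  intro h
  obtain ⟨i, -, hget⟩ := List.infix_iff_getElem?.mp h
  have hlt : 2 ^ (k + 1) < (psi1 k).length := by
    rw [length_psi1 hk, show 2 ^ (k + 2) = 2 * 2 ^ (k + 1) by ring]
    have := Nat.one_le_two_pow (n := k + 1)
    omega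
  have hstart := hget 0 (Nat.zero_lt_of_lt hlt)
  have hperiod := hget (2 ^ (k + 1)) hlt
  rw [getElem_psi1 hk, if_pos rfl, zero_add] at hstart
  rw [getElem_psi1 hk, if_neg (by positivity), padicValNat.prime_pow, add_comm] at hperiod
  have hne : k + 1 ≠ n + 1 := by omega
  have hi0 : i ≠ 0 := by
    rintro rfl
    exact hne (by simpa [psi1_eq_cons hn] using hstart.symm)
  have := padicValNat_two_lt_add_two_pow hi0
  rw [padicValNat_eq_of_getElem?_psi1 hn hne hstart,
    padicValNat_eq_of_getElem?_psi1 hn hne hperiod] at this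
  exact lt_irrefl _ this

/-- For n > k > 0, neither of ψ₁(n) and ψ₁(k) is a factor of the other. -/
theorem psi1_not_factor (n k : ℕ) (hk : 0 < k) (hkn : k < n) :
    ¬ (psi1 k <:+: psi1 n) ∧ ¬ (psi1 n <:+: psi1 k) :=
  ⟨psi1_not_infix hk.ne' (by omega) hkn.ne, psi1_not_infix (by omega) hk.ne' hkn.ne'⟩
end

section
/- Let n₁, n₂ ≥ 0 be letters. If the two-letter word n₁n₂ is not a factor of L(n₂), then L(n₁n₂) = n₁ · L(n₂). -/
def HasPrefixW (f : ℕ → ℕ) (w : List ℕ) : Prop := ∀ i < w.length, f i = w.getD i 0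

def SquaresInPrefix (w : List ℕ) (f : ℕ → ℕ) : Prop :=
  ∀ i l : ℕ, 0 < l → (∀ j < l, f (i + j) = f (i + l + j)) → i + 2 * l ≤ w.length

def Adm (w : List ℕ) (f : ℕ → ℕ) : Prop := HasPrefixW f w ∧ SquaresInPrefix w f

def lexLE (f g : ℕ → ℕ) : Prop :=
  f = g ∨ ∃ i, (∀ j < i, f j = g j) ∧ f i < g i

/-- f = L(w): the lexicographically least infinite word with prefix w whose only
square factors are contained in the prefix w. -/
def IsL (w : List ℕ) (f : ℕ → ℕ) : Prop := Adm w f ∧ ∀ g, Adm w g → lexLE f g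

/-- Prepending a letter to an infinite word. -/
def cons1 (a : ℕ) (f : ℕ → ℕ) : ℕ → ℕ := fun n => match n with
  | 0 => a
  | n + 1 => f n

/-!
Both `n₁ · L(n₂)` and `L(n₁n₂)` are admissible for each other's problem: dropping the first
letter of `L(n₁n₂)` gives a word admissible for `[n₂]`, and `n₁ · L(n₂)` is admissible for
`[n₁, n₂]` because a square at its start of period `l ≥ 2` would make `f (l - 1) f l = n₁ n₂`
a factor of `L(n₂)`. Minimality on both sides and antisymmetry of the lexicographic order
give equality.
-/

@[simp] theorem cons1_zero (a : ℕ) (f : ℕ → ℕ) : cons1 a f 0 = a := rfl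

@[simp] theorem cons1_succ (a : ℕ) (f : ℕ → ℕ) (n : ℕ) : cons1 a f (n + 1) = f n := rfl

theorem lexLE_antisymm {f g : ℕ → ℕ} (hfg : lexLE f g) (hgf : lexLE g f) : f = g := by
  rcases hfg with rfl | ⟨i, hpre, hlt⟩
  · rfl
  rcases hgf with rfl | ⟨j, hpre', hlt'⟩
  · rfl
  exfalso
  rcases lt_trichotomy i j with hij | rfl | hji
  · exact (hpre' i hij).not_gt hlt
  · omega
  · exact (hpre j hji).not_gt hlt'

theorem lexLE_cons1 (a : ℕ) {f g : ℕ → ℕ} (h : lexLE f g) :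
    lexLE (cons1 a f) (cons1 a g) := by
  rcases h with rfl | ⟨i, hpre, hlt⟩
  · exact Or.inl rfl
  refine Or.inr ⟨i + 1, fun j hj => ?_, hlt⟩
  rcases j with _ | j
  · rfl
  · exact hpre j (by omega)

theorem cons1_head_tail (g : ℕ → ℕ) : cons1 (g 0) (fun n => g (n + 1)) = g := by
  funext n
  cases n <;> rfl

theorem HasPrefixW.cons1 {f : ℕ → ℕ} {w : List ℕ} (h : HasPrefixW f w) (a : ℕ) :
    HasPrefixW (cons1 a f) (a :: w) := by
  intro i hi
  rcases i with _ | i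
  · rfl
  · exact h i (by simpa using hi)

theorem SquaresInPrefix.cons1_square_succ {f : ℕ → ℕ} {w : List ℕ} (h : SquaresInPrefix w f)
    (a : ℕ) {i l : ℕ} (hl : 0 < l)
    (hsq : ∀ j < l, cons1 a f (i + 1 + j) = cons1 a f (i + 1 + l + j)) :
    i + 1 + 2 * l ≤ (a :: w).length := by
  have := h i l hl fun j hj => by
    simpa only [Nat.add_right_comm _ 1, cons1_succ] using hsq j hj
  simp only [List.length_cons]
  omega

theorem Adm.tail {g : ℕ → ℕ} {a : ℕ} {w : List ℕ} (h : Adm (a :: w) g) :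
    Adm w (fun n => g (n + 1)) := by
  obtain ⟨hpre, hsq⟩ := h
  refine ⟨fun i hi => hpre (i + 1) (by simpa using hi), fun i l hl hil => ?_⟩
  have := hsq (i + 1) l hl fun j hj => by
    simpa only [Nat.add_right_comm _ 1] using hil j hj
  simp only [List.length_cons] at this
  omega

theorem IsL.eq_cons1_of_adm {a : ℕ} {w : List ℕ} {f g : ℕ → ℕ} (hg : IsL (a :: w) g)
    (hf : IsL w f) (hadm : Adm (a :: w) (cons1 a f)) : g = cons1 a f := by
  have hg0 : g 0 = a := hg.1.1 0 (by simp)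
  refine lexLE_antisymm (hg.2 _ hadm) ?_
  have := lexLE_cons1 a (hf.2 _ hg.1.tail)
  rwa [← hg0, cons1_head_tail, hg0] at this

theorem cons1_square_at_zero {a : ℕ} {f : ℕ → ℕ} {l : ℕ}
    (hsq : ∀ j < l + 2, cons1 a f (0 + j) = cons1 a f (0 + (l + 2) + j)) :
    f (l + 1) = a ∧ f (l + 2) = f 0 :=
  ⟨by simpa using (hsq 0 (by omega)).symm, by simpa using (hsq 1 (by omega)).symm⟩

theorem adm_cons1_of_not_factor {a b : ℕ} {f : ℕ → ℕ} (hf : Adm [b] f)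
    (hnf : ¬ ∃ i, f i = a ∧ f (i + 1) = b) : Adm [a, b] (cons1 a f) := by
  refine ⟨hf.1.cons1 a, fun i l hl hsq => ?_⟩
  rcases i with _ | i
  · obtain _ | _ | l := l
    · omega
    · simp
    · have hf0 : f 0 = b := hf.1 0 (by simp)
      obtain ⟨ha, hb⟩ := cons1_square_at_zero hsq
      exact absurd ⟨l + 1, ha, hb.trans hf0⟩ hnf
  · exact hf.2.cons1_square_succ a hl hsq

/-- If the two-letter word n₁n₂ is not a factor of L(n₂), then L(n₁n₂) = n₁·L(n₂). -/
theorem L_two_letter (n₁ n₂ : ℕ) (f g : ℕ → ℕ)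
    (hf : IsL [n₂] f)
    (hnf : ¬ ∃ i, f i = n₁ ∧ f (i + 1) = n₂)
    (hg : IsL [n₁, n₂] g) :
    g = cons1 n₁ f :=
  hg.eq_cons1_of_adm hf (adm_cons1_of_not_factor hf.1 hnf)
end

section
/- Let w be a nonempty finite word over ℕ containing a square. Then there is a unique decomposition w = p·s·q such that s·q is the maximal square-free suffix of w (p, s nonempty, q possibly empty) and p[−1]·s is the maximal square prefix of p[−1]·s·q, where p[−1] is the last letter of p. -/
/-
Both maximality conditions single out a longest element among the suffixes (resp. prefixes) of a
fixed word satisfying a property, and two such longest elements have the same length and hence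
coincide; this gives uniqueness. For existence let m be the longest square-free suffix of w. Since
w contains a square, m ≠ w, so w = p·m with p = p'·a nonempty, and a·m is not square-free. As m is
square-free, every square occurring in a·m must occur as a prefix; take the longest such prefix
a·s and write m = s·q.
-/

namespace List

variable {α : Type*}

def IsSquareWord (t : List α) : Prop := ∃ y, y ≠ [] ∧ t = y ++ y

theorem IsSquareWord.two_le_length {t : List α} (h : IsSquareWord t) : 2 ≤ t.length := by
  obtain ⟨y, hy, rfl⟩ := h
  have := length_pos_iff.mpr hy
  rw [length_append]
  omega

def IsLongestSuffix (P : List α → Prop) (m w : List α) : Prop :=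
  m <:+ w ∧ P m ∧ ∀ t, t <:+ w → P t → t.length ≤ m.length

def IsLongestPrefix (P : List α → Prop) (m w : List α) : Prop :=
  m <+: w ∧ P m ∧ ∀ t, t <+: w → P t → t.length ≤ m.length

theorem exists_isLongestSuffix {P : List α → Prop} {w : List α} (h : ∃ t, t <:+ w ∧ P t) :
    ∃ m, IsLongestSuffix P m w := by
  have hfin : {t | t <:+ w ∧ P t}.Finite :=
    (finite_toSet w.tails).subset fun t ht => (mem_tails t w).2 ht.1
  obtain ⟨m, ⟨hmw, hm⟩, hmax⟩ := Set.exists_max_image _ length hfin h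
  exact ⟨m, hmw, hm, fun t htw ht => hmax t ⟨htw, ht⟩⟩

theorem exists_isLongestPrefix {P : List α → Prop} {w : List α} (h : ∃ t, t <+: w ∧ P t) :
    ∃ m, IsLongestPrefix P m w := by
  have hfin : {t | t <+: w ∧ P t}.Finite :=
    (finite_toSet w.inits).subset fun t ht => (mem_inits t w).2 ht.1
  obtain ⟨m, ⟨hmw, hm⟩, hmax⟩ := Set.exists_max_image _ length hfin h
  exact ⟨m, hmw, hm, fun t htw ht => hmax t ⟨htw, ht⟩⟩

theorem IsLongestSuffix.unique {P : List α → Prop} {m m' w : List α}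
    (h : IsLongestSuffix P m w) (h' : IsLongestSuffix P m' w) : m = m' := by
  have hlen : m.length = m'.length := le_antisymm (h'.2.2 m h.1 h.2.1) (h.2.2 m' h'.1 h'.2.1)
  exact (suffix_of_suffix_length_le h.1 h'.1 hlen.le).eq_of_length hlen

theorem IsLongestPrefix.unique {P : List α → Prop} {m m' w : List α}
    (h : IsLongestPrefix P m w) (h' : IsLongestPrefix P m' w) : m = m' := by
  have hlen : m.length = m'.length := le_antisymm (h'.2.2 m h.1 h.2.1) (h.2.2 m' h'.1 h'.2.1)
  exact (prefix_of_prefix_length_le h.1 h'.1 hlen.le).eq_of_length hlen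

end List

open List

theorem sqFree_nil : SqFree [] := fun _ hy h =>
  hy (append_eq_nil_iff.mp (infix_nil.mp h)).1

theorem exists_isSquareWord_prefix_cons {a : ℕ} {m : List ℕ} (hm : SqFree m)
    (ham : ¬ SqFree (a :: m)) : ∃ t, t <+: a :: m ∧ IsSquareWord t := by
  simp only [SqFree, not_forall, not_not] at ham
  obtain ⟨y, hy, hya⟩ := ham
  rcases infix_cons_iff.mp hya with hpre | hinf
  · exact ⟨y ++ y, hpre, y, hy, rfl⟩
  · exact absurd hinf (hm y hy)

theorem exists_psq_decomposition {w : List ℕ} (hsq : ∃ y : List ℕ, y ≠ [] ∧ (y ++ y) <:+: w) :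
    ∃ p a s q, w = p ++ [a] ++ s ++ q ∧ s ≠ [] ∧ IsLongestSuffix SqFree (s ++ q) w ∧
      IsLongestPrefix IsSquareWord (a :: s) (a :: (s ++ q)) := by
  obtain ⟨m, ⟨p, rfl⟩, hm, hmax⟩ :=
    exists_isLongestSuffix (P := SqFree) (w := w) ⟨[], nil_suffix, sqFree_nil⟩
  obtain ⟨p, a, rfl⟩ : ∃ p' a, p = p' ++ [a] := by
    rcases eq_nil_or_concat p with rfl | ⟨p', a, rfl⟩
    · obtain ⟨y, hy, hyw⟩ := hsq
      exact absurd hyw (hm y hy)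
    · exact ⟨p', a, concat_eq_append⟩
  have ham : ¬ SqFree (a :: m) := fun hsf =>
    absurd (hmax (a :: m) ⟨p, by simp⟩ hsf) (by simp)
  obtain ⟨v, hv, hvsq, hvmax⟩ := exists_isLongestPrefix (exists_isSquareWord_prefix_cons hm ham)
  have hvlen := hvsq.two_le_length
  obtain ⟨s, rfl, ⟨q, rfl⟩⟩ : ∃ s, v = a :: s ∧ s <+: m :=
    (prefix_cons_iff.mp hv).resolve_left (by rintro rfl; simp at hvlen)
  have hs : s ≠ [] := by rintro rfl; simp at hvlen
  exact ⟨p, a, s, q, by simp, hs, ⟨⟨p ++ [a], by simp⟩, hm, hmax⟩, ⟨hv, hvsq, hvmax⟩⟩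

theorem unique_psq_decomposition_general (w : List ℕ)
    (hsq : ∃ y : List ℕ, y ≠ [] ∧ (y ++ y) <:+: w) :
    ∃! psq : List ℕ × List ℕ × List ℕ,
      w = psq.1 ++ psq.2.1 ++ psq.2.2 ∧ psq.1 ≠ [] ∧ psq.2.1 ≠ [] ∧
      SqFree (psq.2.1 ++ psq.2.2) ∧
      (∀ t : List ℕ, t <:+ w → SqFree t → t.length ≤ (psq.2.1 ++ psq.2.2).length) ∧
      (∃ y : List ℕ, y ≠ [] ∧ psq.1.getLast! :: psq.2.1 = y ++ y) ∧
      (∀ t : List ℕ, t <+: (psq.1.getLast! :: (psq.2.1 ++ psq.2.2)) →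
        (∃ y : List ℕ, y ≠ [] ∧ t = y ++ y) → t.length ≤ psq.2.1.length + 1) := by
  obtain ⟨p, a, s, q, rfl, hs, hsuf, hpre⟩ := exists_psq_decomposition hsq
  have hlast : (p ++ [a]).getLast! = a := by simp
  refine ⟨(p ++ [a], s, q), ⟨by simp, by simp, hs, hsuf.2.1, hsuf.2.2, ?_, ?_⟩, ?_⟩
  · dsimp only; rw [hlast]; exact hpre.2.1
  · dsimp only; rw [hlast]; exact hpre.2.2
  rintro ⟨p', s', q'⟩ ⟨hw', -, -, hsf', hmax', hsq', hmaxsq'⟩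
  dsimp only at hw' hsf' hmax' hsq' hmaxsq'
  have hsq_eq : s ++ q = s' ++ q' := hsuf.unique ⟨⟨p', by rw [hw', append_assoc]⟩, hsf', hmax'⟩
  obtain rfl : p ++ [a] = p' :=
    append_cancel_right (by simpa only [append_assoc, hsq_eq] using hw')
  rw [hlast] at hsq' hmaxsq'
  rw [← hsq_eq] at hmaxsq'
  have hpre' : IsLongestPrefix IsSquareWord (a :: s') (a :: (s ++ q)) :=
    ⟨by rw [hsq_eq]; exact prefix_append (a :: s') q', hsq', hmaxsq'⟩
  obtain rfl : s = s' := cons_injective (hpre.unique hpre')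
  obtain rfl : q = q' := append_cancel_left hsq_eq
  rfl

/-- Every nonempty finite word containing a square has a unique decomposition
w = p·s·q where s·q is the maximal square-free suffix of w and p[−1]·s is the
maximal square prefix of p[−1]·s·q. -/
theorem unique_psq_decomposition (w : List ℕ) (hw : w ≠ [])
    (hsq : ∃ y : List ℕ, y ≠ [] ∧ (y ++ y) <:+: w) :
    ∃! psq : List ℕ × List ℕ × List ℕ,
      w = psq.1 ++ psq.2.1 ++ psq.2.2 ∧ psq.1 ≠ [] ∧ psq.2.1 ≠ [] ∧
      SqFree (psq.2.1 ++ psq.2.2) ∧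
      (∀ t : List ℕ, t <:+ w → SqFree t → t.length ≤ (psq.2.1 ++ psq.2.2).length) ∧
      (∃ y : List ℕ, y ≠ [] ∧ psq.1.getLast! :: psq.2.1 = y ++ y) ∧
      (∀ t : List ℕ, t <+: (psq.1.getLast! :: (psq.2.1 ++ psq.2.2)) →
        (∃ y : List ℕ, y ≠ [] ∧ t = y ++ y) → t.length ≤ psq.2.1.length + 1) :=
  unique_psq_decomposition_general w hsq
end

section
/- Let w be a finite square-free word with m square-free restrictions, and define x_m as in the recursive construction x_0 = v_0, x_{i+1} = v_{i+1} x_i r_i x_i with v_i = max(w)+i+1 and r_i the i-th square-free restriction of w in lexicographic order. Then for every index 0 ≤ j < |w| and every letter ℓ < w[j], the word x_m · w[:j] · ℓ has a square suffix. -/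
def maxL (w : List ℕ) : ℕ := w.foldr max 0

def Restriction (w v : List ℕ) : Prop :=
  ∃ j, j < w.length ∧ ∃ k, k < w.getD j 0 ∧ v = w.take j ++ [k]

/-! If `w[:j]·ℓ` is square-free it is some restriction `r_i`, and `x_m` ends in `x_i r_i x_i`, so
`x_m w[:j] ℓ` ends in the square `(x_i r_i)(x_i r_i)`. Otherwise `w[:j]·ℓ` contains a square, which
must be a suffix because `w[:j]` is square-free. -/

theorem SqFree.of_infix {u w : List ℕ} (hw : SqFree w) (h : u <:+: w) : SqFree u :=
  fun y hy hyy => hw y hy (hyy.trans h)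

theorem exists_square_suffix_of_not_sqFree_concat {u : List ℕ} {a : ℕ} (hu : SqFree u)
    (h : ¬ SqFree (u ++ [a])) : ∃ y : List ℕ, y ≠ [] ∧ y ++ y <:+ u ++ [a] := by
  simp only [SqFree, not_forall, not_not] at h
  obtain ⟨y, hy, hyy⟩ := h
  refine ⟨y, hy, ?_⟩
  rcases List.infix_concat_iff.mp hyy with hsuf | hinf
  · exact hsuf
  · exact absurd hinf (hu y hy)

theorem List.isSuffix_of_le_of_isSuffix_succ {α : Type*} {x : ℕ → List α}
    (h : ∀ i, x i <:+ x (i + 1)) {i n : ℕ} (hin : i ≤ n) : x i <:+ x n := by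
  induction hin with
  | refl => exact List.suffix_refl _
  | step _ ih => exact ih.trans (h _)

theorem square_isSuffix_of_doubling {α : Type*} {x r : ℕ → List α} {c : ℕ → α}
    (hx : ∀ i, x (i + 1) = c i :: (x i ++ r i ++ x i)) {i m : ℕ} (him : i < m) :
    (x i ++ r i) ++ (x i ++ r i) <:+ x m ++ r i := by
  have hstep : ∀ i, x i ++ r i ++ x i <:+ x (i + 1) := fun i => by
    rw [hx i]; exact List.suffix_cons _ _
  have hsucc : ∀ i, x i <:+ x (i + 1) :=
    fun i => (List.suffix_append _ _).trans (hstep i)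
  have hxm : x i ++ r i ++ x i <:+ x m :=
    (hstep i).trans (List.isSuffix_of_le_of_isSuffix_succ hsucc him)
  simpa only [List.append_assoc] using List.suffix_append_self_iff.mpr hxm

theorem xm_forces_w_general (w : List ℕ) (hw : SqFree w) (m : ℕ) (r : ℕ → List ℕ)
    (hr2 : ∀ v : List ℕ, Restriction w v → SqFree v → ∃ i < m, r i = v)
    (x : ℕ → List ℕ)
    (hxs : ∀ i, x (i + 1) = (maxL w + i + 2) :: (x i ++ r i ++ x i)) :
    ∀ j < w.length, ∀ l < w.getD j 0,
      ∃ y : List ℕ, y ≠ [] ∧ (y ++ y) <:+ (x m ++ w.take j ++ [l]) := by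
  intro j hj l hl
  rw [List.append_assoc]
  by_cases hsq : SqFree (w.take j ++ [l])
  · obtain ⟨i, him, hri⟩ := hr2 _ ⟨j, hj, l, hl, rfl⟩ hsq
    refine ⟨x i ++ r i, by simp [hri], ?_⟩
    rw [← hri]
    exact square_isSuffix_of_doubling hxs him
  · obtain ⟨y, hy, hyy⟩ := exists_square_suffix_of_not_sqFree_concat
      (hw.of_infix (List.take_prefix j w).isInfix) hsq
    exact ⟨y, hy, hyy.trans (List.suffix_append _ _)⟩

/-- With r₀ ≺ ⋯ ≺ r_{m−1} the restriction sequence of the square-free word w,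
v_i = max(w)+i+1, x₀ = v₀ and x_{i+1} = v_{i+1}·x_i·r_i·x_i: for every index
j < |w| and every letter ℓ < w[j], the word x_m · w[:j] · ℓ has a square suffix. -/
theorem xm_forces_w (w : List ℕ) (hw : SqFree w) (m : ℕ) (r : ℕ → List ℕ)
    (hr1 : ∀ i < m, Restriction w (r i) ∧ SqFree (r i))
    (hr2 : ∀ v : List ℕ, Restriction w v → SqFree v → ∃ i < m, r i = v)
    (hr3 : ∀ i j, i < j → j < m → List.Lex (· < ·) (r i) (r j))
    (x : ℕ → List ℕ)
    (hx0 : x 0 = [maxL w + 1])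
    (hxs : ∀ i, x (i + 1) = (maxL w + i + 2) :: (x i ++ r i ++ x i)) :
    ∀ j < w.length, ∀ l < w.getD j 0,
      ∃ y : List ℕ, y ≠ [] ∧ (y ++ y) <:+ (x m ++ w.take j ++ [l]) :=
  xm_forces_w_general w hw m r hr2 x hxs
end
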